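/- For every d ≥ r ≥ 1 and every n with 2dr + 1 < n ≤ 4dr, there exists a complex (d,r,n)-Stiefel orthoplex code: n matrices in St_C(d,r) with all pairwise Frobenius distances at least sqrt(2r). -/

import Mathlib

open Matrix

/-- The Frobenius (chordal) distance between two complex matrices. -/
noncomputable def frobDist {d r : ℕ} (X Y : Matrix (Fin d) (Fin r) ℂ) : ℝ :=
  Real.sqrt (∑ i, ∑ j, ‖X i j - Y i j‖ ^ 2)

/-!
For isometries (`Xᴴ X = 1`) one has `‖X - Y‖² = 2 r - 2 Re Tr (Xᴴ Y)`, so a code only needs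
`Re Tr (Xᴴ Y) ≤ 0`. If `Y₁, …, Yₘ` are isometries with `Tr (Yᵢᴴ Yⱼ) = 0` for `i ≠ j`, the `4 m`
matrices `iˢ Yⱼ` form such a code, because `Re (conj (iˢ) iᵗ) ≤ 0` for distinct `s, t` mod `4`.
Such a family of `d r` isometries is obtained by putting column `j` into row `j + a` (mod `d`;
injective since `r ≤ d`) with entry `ω ^ (b j)`, for `a` mod `d`, `b` mod `r` and a primitive
`r`-th root of unity `ω`: for `a ≠ a'` the diagonal of the product vanishes, and for `a = a'` the
trace is a full geometric sum of the root of unity `conj (ω ^ b) ω ^ b' ≠ 1`. Any `n ≤ 4 d r` of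
these matrices form a code.
-/

open Complex

section StiefelOrthoplexCode

variable {d r : ℕ}

lemma re_trace_conjTranspose_mul (X Y : Matrix (Fin d) (Fin r) ℂ) :
    (Xᴴ * Y).trace.re = ∑ i, ∑ j, (star (X i j) * Y i j).re := by
  simp only [trace, diag, mul_apply, conjTranspose_apply, re_sum]
  exact Finset.sum_comm

lemma frobDist_sq (X Y : Matrix (Fin d) (Fin r) ℂ) :
    frobDist X Y ^ 2 = (Xᴴ * X).trace.re + (Yᴴ * Y).trace.re - 2 * (Xᴴ * Y).trace.re := by
  rw [frobDist, Real.sq_sqrt (by positivity), re_trace_conjTranspose_mul,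
    re_trace_conjTranspose_mul, re_trace_conjTranspose_mul]
  simp only [Finset.mul_sum, ← Finset.sum_add_distrib, ← Finset.sum_sub_distrib]
  refine Finset.sum_congr rfl fun i _ => Finset.sum_congr rfl fun j _ => ?_
  simp only [Complex.sq_norm, normSq_apply, star_def, mul_re, conj_re, conj_im, sub_re, sub_im]
  ring

lemma sqrt_two_mul_le_frobDist {X Y : Matrix (Fin d) (Fin r) ℂ} (hX : Xᴴ * X = 1)
    (hY : Yᴴ * Y = 1) (h : (Xᴴ * Y).trace.re ≤ 0) : Real.sqrt (2 * r) ≤ frobDist X Y := by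
  have hsq := frobDist_sq X Y
  rw [hX, hY, trace_one, Fintype.card_fin] at hsq
  rw [Real.sqrt_le_iff]
  exact ⟨Real.sqrt_nonneg _, by simp only [natCast_re] at hsq; linarith⟩

def IsStiefelOrthoplexCode {ι : Type*} (X : ι → Matrix (Fin d) (Fin r) ℂ) : Prop :=
  (∀ i, (X i)ᴴ * X i = 1) ∧ Pairwise fun i j => Real.sqrt (2 * r) ≤ frobDist (X i) (X j)

lemma IsStiefelOrthoplexCode.comp_injective {ι κ : Type*} {X : ι → Matrix (Fin d) (Fin r) ℂ}
    (hX : IsStiefelOrthoplexCode X) {f : κ → ι} (hf : Function.Injective f) :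
    IsStiefelOrthoplexCode (X ∘ f) :=
  ⟨fun i => hX.1 (f i), fun _ _ hij => hX.2 (hf.ne hij)⟩

theorem isStiefelOrthoplexCode_smul {κ ι : Type*} {c : κ → ℂ} (hc_norm : ∀ s, ‖c s‖ = 1)
    (hc_re : Pairwise fun s t => (star (c s) * c t).re ≤ 0)
    {Y : ι → Matrix (Fin d) (Fin r) ℂ} (hY : ∀ i, (Y i)ᴴ * Y i = 1)
    (horth : Pairwise fun i j => ((Y i)ᴴ * Y j).trace = 0) :
    IsStiefelOrthoplexCode fun p : κ × ι => c p.1 • Y p.2 := by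
  have gram (p q : κ × ι) :
      (c p.1 • Y p.2)ᴴ * (c q.1 • Y q.2) = (star (c p.1) * c q.1) • ((Y p.2)ᴴ * Y q.2) := by
    rw [conjTranspose_smul, Matrix.smul_mul, Matrix.mul_smul, smul_smul]
  have hstiefel (p : κ × ι) : (c p.1 • Y p.2)ᴴ * (c p.1 • Y p.2) = 1 := by
    rw [gram, hY, star_def, conj_mul', hc_norm, ofReal_one, one_pow, one_smul]
  refine ⟨hstiefel, fun ⟨s, i⟩ ⟨t, j⟩ hne =>
    sqrt_two_mul_le_frobDist (hstiefel _) (hstiefel _) ?_⟩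
  rw [gram, trace_smul, smul_eq_mul]
  obtain rfl | hij := eq_or_ne i j
  · have hst : s ≠ t := fun h => hne (by rw [h])
    rw [hY, trace_one, Fintype.card_fin, ← ofReal_natCast, re_mul_ofReal]
    exact mul_nonpos_of_nonpos_of_nonneg (hc_re hst) (Nat.cast_nonneg r)
  · rw [horth hij, mul_zero, zero_re]

end StiefelOrthoplexCode

lemma conjTranspose_mul_monomial {m n α : Type*} [Fintype m] [DecidableEq m] [Semiring α]
    [StarRing α] (f g : n → m) (u v : n → α) :
    (of fun i j => if i = f j then u j else 0)ᴴ * of (fun i j => if i = g j then v j else 0) =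
      of fun j k => if f j = g k then star (u j) * v k else 0 := by
  ext j k
  simp [mul_apply, apply_ite star, ite_mul, eq_comm]

lemma IsPrimitiveRoot.sum_star_pow_mul_pow_eq_zero {ω : ℂ} {r : ℕ} (hω : IsPrimitiveRoot ω r)
    {b b' : Fin r} (hbb' : b ≠ b') :
    ∑ j : Fin r, star (ω ^ ((b : ℕ) * j)) * ω ^ ((b' : ℕ) * j) = 0 := by
  set z := star (ω ^ (b : ℕ)) * ω ^ (b' : ℕ)
  have hnorm : ‖ω ^ (b : ℕ)‖ = 1 := by rw [norm_pow, hω.norm'_eq_one b.pos.ne', one_pow]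
  have hunit : ω ^ (b : ℕ) * star (ω ^ (b : ℕ)) = 1 := by
    rw [star_def, mul_conj', hnorm, ofReal_one, one_pow]
  have hz1 : z ≠ 1 := by
    intro hz
    have : ω ^ (b' : ℕ) = ω ^ (b : ℕ) := by
      rw [← mul_one (ω ^ (b : ℕ)), ← hz, ← mul_assoc, hunit, one_mul]
    exact hbb' (Fin.ext (hω.pow_inj b'.isLt b.isLt this).symm)
  have hzr : z ^ r = 1 := by
    rw [mul_pow, ← star_pow, pow_right_comm, pow_right_comm ω (b' : ℕ), hω.pow_eq_one, one_pow,
      one_pow, star_one, one_mul]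
  have hsum : ∑ j ∈ Finset.range r, z ^ j = 0 := by
    have := geom_sum_mul z r
    rw [hzr, sub_self] at this
    exact (mul_eq_zero.1 this).resolve_right (sub_ne_zero.2 hz1)
  rw [← hsum, ← Fin.sum_univ_eq_sum_range]
  refine Finset.sum_congr rfl fun j _ => ?_
  rw [pow_mul, pow_mul, star_pow, mul_pow]

section ShiftTwist

variable {d r : ℕ} (hrd : r ≤ d) (ω : ℂ)

noncomputable def shiftTwist (a : Fin d) (b : Fin r) : Matrix (Fin d) (Fin r) ℂ :=
  of fun i j => if i = Fin.castLE hrd j + a then ω ^ ((b : ℕ) * j) else 0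

lemma conjTranspose_shiftTwist_mul (a a' : Fin d) (b b' : Fin r) :
    (shiftTwist hrd ω a b)ᴴ * shiftTwist hrd ω a' b' = of fun j k =>
      if Fin.castLE hrd j + a = Fin.castLE hrd k + a' then
        star (ω ^ ((b : ℕ) * j)) * ω ^ ((b' : ℕ) * k) else 0 :=
  conjTranspose_mul_monomial _ _ _ _

variable {ω}

lemma shiftTwist_conjTranspose_mul_self (hω : ‖ω‖ = 1) (a : Fin d) (b : Fin r) :
    (shiftTwist hrd ω a b)ᴴ * shiftTwist hrd ω a b = 1 := by
  ext j k
  rw [conjTranspose_shiftTwist_mul, of_apply, one_apply]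
  simp only [add_left_inj, Fin.castLE_inj]
  split_ifs with hjk
  · rw [hjk, star_def, conj_mul', norm_pow, hω, one_pow, ofReal_one, one_pow]
  · rfl

lemma pairwise_trace_conjTranspose_shiftTwist_mul_eq_zero (hω : IsPrimitiveRoot ω r) :
    Pairwise fun p q : Fin d × Fin r =>
      ((shiftTwist hrd ω p.1 p.2)ᴴ * shiftTwist hrd ω q.1 q.2).trace = 0 := by
  rintro ⟨a, b⟩ ⟨a', b'⟩ hne
  simp only [trace, diag, conjTranspose_shiftTwist_mul, of_apply, add_right_inj]
  obtain rfl | ha := eq_or_ne a a'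
  · have hb : b ≠ b' := fun h => hne (by rw [h])
    simpa using hω.sum_star_pow_mul_pow_eq_zero hb
  · simp [ha]

end ShiftTwist

lemma re_star_I_pow_mul_I_pow_nonpos {s t : Fin 4} (hst : s ≠ t) :
    (star (I ^ (s : ℕ)) * I ^ (t : ℕ)).re ≤ 0 := by
  fin_cases s <;> fin_cases t <;> simp_all [pow_succ]

theorem exists_complex_stiefel_orthoplex_code_general (d r n : ℕ)
    (hr : 1 ≤ r) (hdr : r ≤ d) (hn₂ : n ≤ 4 * d * r) :
    ∃ X : Fin n → Matrix (Fin d) (Fin r) ℂ,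
      (∀ i, (X i)ᴴ * X i = 1) ∧
      (∀ i j : Fin n, i ≠ j → Real.sqrt (2 * r) ≤ frobDist (X i) (X j)) := by
  obtain ⟨ω, hω⟩ : ∃ ω : ℂ, IsPrimitiveRoot ω r := ⟨_, isPrimitiveRoot_exp r (by omega)⟩
  have hcode := isStiefelOrthoplexCode_smul (c := fun s : Fin 4 => I ^ (s : ℕ))
    (fun s => by simp) (fun _ _ => re_star_I_pow_mul_I_pow_nonpos)
    (Y := fun p : Fin d × Fin r => shiftTwist hdr ω p.1 p.2)
    (fun p => shiftTwist_conjTranspose_mul_self hdr (hω.norm'_eq_one (by omega)) p.1 p.2)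
    (pairwise_trace_conjTranspose_shiftTwist_mul_eq_zero hdr hω)
  have hcard : n ≤ Fintype.card (Fin 4 × (Fin d × Fin r)) := by simpa [mul_assoc] using hn₂
  have hinj := ((Fin.castLEEmb hcard).trans (Fintype.equivFin _).symm.toEmbedding).injective
  obtain ⟨hstiefel, hdist⟩ := hcode.comp_injective hinj
  exact ⟨_, hstiefel, fun _ _ hij => hdist hij⟩

theorem exists_complex_stiefel_orthoplex_code (d r n : ℕ)
    (hr : 1 ≤ r) (hdr : r ≤ d) (hn₁ : 2 * d * r + 1 < n) (hn₂ : n ≤ 4 * d * r) :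
    ∃ X : Fin n → Matrix (Fin d) (Fin r) ℂ,
      (∀ i, (X i)ᴴ * X i = 1) ∧
      (∀ i j : Fin n, i ≠ j → Real.sqrt (2 * r) ≤ frobDist (X i) (X j)) :=
  exists_complex_stiefel_orthoplex_code_general d r n hr hdr hn₂
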